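/- Let {(bᵢ, dᵢ)}_{i ∈ s} and {(bᵢ', dᵢ')}_{i ∈ s} be two finite families of pairs of real numbers indexed by the same finite set s, with bᵢ ≤ dᵢ and bᵢ' ≤ dᵢ' for every i, and suppose ε ≥ 0 satisfies |bᵢ - bᵢ'| ≤ ε and |dᵢ - dᵢ'| ≤ ε for every i ∈ s. Let λ₁ and λ₁' be the corresponding first landscape functions, λ₁(t) = max over i ∈ s of max(min(t - bᵢ, dᵢ - t), 0), and similarly for λ₁' (each taken to be 0 if s is empty). Then for every t ∈ ℝ, |λ₁(t) - λ₁'(t)| ≤ ε. -/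

import Mathlib

namespace Finset

variable {ι α : Type*} [AddCommGroup α] [LinearOrder α] [IsOrderedAddMonoid α]

theorem fold_max_le_fold_max_add {s : Finset ι} {f g : ι → α} {b ε : α} (hε : 0 ≤ ε)
    (h : ∀ i ∈ s, f i ≤ g i + ε) : s.fold max b f ≤ s.fold max b g + ε := by
  have hg : ∀ i ∈ s, g i ≤ s.fold max b g := fun i hi => (le_fold_max _).2 (.inr ⟨i, hi, le_rfl⟩)
  refine (fold_max_le _).2 ⟨?_, fun i hi => (h i hi).trans (by gcongr; exact hg i hi)⟩
  exact ((le_fold_max _).2 (.inl le_rfl)).trans (le_add_of_nonneg_right hε)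

theorem abs_fold_max_sub_fold_max_le {s : Finset ι} {f g : ι → α} {b ε : α} (hε : 0 ≤ ε)
    (h : ∀ i ∈ s, |f i - g i| ≤ ε) : |s.fold max b f - s.fold max b g| ≤ ε := by
  refine abs_sub_le_iff.2 ⟨?_, ?_⟩ <;> rw [sub_le_iff_le_add']
  · exact fold_max_le_fold_max_add hε fun i hi =>
      sub_le_iff_le_add'.1 (abs_sub_le_iff.1 (h i hi)).1
  · exact fold_max_le_fold_max_add hε fun i hi =>
      sub_le_iff_le_add'.1 (abs_sub_le_iff.1 (h i hi)).2

end Finset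

def tent (b d t : ℝ) : ℝ := max (min (t - b) (d - t)) 0

theorem abs_tent_sub_tent_le (b d b' d' t : ℝ) :
    |tent b d t - tent b' d' t| ≤ max |b - b'| |d - d'| := by
  calc |tent b d t - tent b' d' t|
      ≤ |min (t - b) (d - t) - min (t - b') (d' - t)| := abs_max_sub_max_le_abs _ _ _
    _ ≤ max |t - b - (t - b')| |d - t - (d' - t)| := abs_min_sub_min_le_max _ _ _ _
    _ = max |b - b'| |d - d'| := by
      rw [sub_sub_sub_cancel_left, abs_sub_comm, sub_sub_sub_cancel_right]

theorem stmt_7_general {ι : Type*} (s : Finset ι) (b d b' d' : ι → ℝ) (ε : ℝ) (hε : 0 ≤ ε)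
    (hb : ∀ i ∈ s, |b i - b' i| ≤ ε) (hd : ∀ i ∈ s, |d i - d' i| ≤ ε) (t : ℝ) :
    |(s.fold max 0 fun i => max (min (t - b i) (d i - t)) 0)
      - (s.fold max 0 fun i => max (min (t - b' i) (d' i - t)) 0)| ≤ ε :=
  Finset.abs_fold_max_sub_fold_max_le hε fun i hi =>
    (abs_tent_sub_tent_le (b i) (d i) (b' i) (d' i) t).trans (max_le (hb i hi) (hd i hi))

/-- Given two finite families `{(bᵢ, dᵢ)}` and `{(bᵢ', dᵢ')}` over the same finite
index set `s`, with `bᵢ ≤ dᵢ`, `bᵢ' ≤ dᵢ'`, and `|bᵢ - bᵢ'| ≤ ε`, `|dᵢ - dᵢ'| ≤ ε`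
for all `i ∈ s` (where `ε ≥ 0`), the corresponding first landscape functions
(taken to be `0` when `s` is empty) satisfy `|λ₁(t) - λ₁'(t)| ≤ ε` for every `t`. -/
theorem stmt_7 {ι : Type*} (s : Finset ι) (b d b' d' : ι → ℝ) (ε : ℝ) (hε : 0 ≤ ε)
    (hbd : ∀ i ∈ s, b i ≤ d i) (hbd' : ∀ i ∈ s, b' i ≤ d' i)
    (hb : ∀ i ∈ s, |b i - b' i| ≤ ε) (hd : ∀ i ∈ s, |d i - d' i| ≤ ε) (t : ℝ) :
    |(s.fold max 0 fun i => max (min (t - b i) (d i - t)) 0)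
      - (s.fold max 0 fun i => max (min (t - b' i) (d' i - t)) 0)| ≤ ε :=
  stmt_7_general s b d b' d' ε hε hb hd t
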